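/- Let (ω_k)_{k≥1} be a sequence of real numbers and (y_j)_{j≥0} a sequence of reals such that e^{−i τ_k y_j} → e^{i ω_k} as j → ∞ for every k ≥ 1. Define Δ₀^ω(x) = I + Σ_{k=1}^∞ A_k e^{i ω_k} e^{−τ_k x} for x ∈ ℝ and Δ₀(z) = I + Σ_{k=1}^∞ A_k e^{−τ_k z} for z ∈ ℂ. Then for every β > 0, sup_{x ∈ [−β,β]} |Δ₀(x + i y_j) − Δ₀^ω(x)| → 0 as j → ∞. -/

import Mathlib

open Matrix Filter Complex Topology

attribute [local instance] Matrix.frobeniusNormedAddCommGroup Matrix.frobeniusNormedSpace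

/-!
Writing `z = x + i y_j`, the two series differ termwise by
`e^{-τ_k x} (e^{-i τ_k y_j} - e^{i ω_k}) A_k`. For `|x| ≤ β` the real factor is at most `e^{τ* β}`,
so the supremum over `[-β, β]` is bounded by `e^{τ* β} Σ_k ‖A_k‖ |e^{-i τ_k y_j} - e^{i ω_k}|`,
which tends to `0` by dominated convergence for series (Tannery's theorem), each term tending to
`0` and being dominated by `2 e^{τ* β} ‖A_k‖`.
-/

lemma summable_mul_of_norm_le {β : Type*} {a d : β → ℝ} {M : ℝ} (ha : Summable a)
    (hd : ∀ k, ‖d k‖ ≤ M) : Summable fun k => d k * a k :=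
  Summable.of_norm_bounded (ha.abs.mul_left M) fun k => by
    rw [norm_mul, Real.norm_eq_abs (a k)]
    exact mul_le_mul_of_nonneg_right (hd k) (abs_nonneg _)

lemma tendsto_tsum_mul_zero_of_norm_le {α β : Type*} {l : Filter α} {a : β → ℝ}
    {d : α → β → ℝ} {M : ℝ} (ha : Summable a) (hd : ∀ j k, ‖d j k‖ ≤ M)
    (hlim : ∀ k, Tendsto (d · k) l (𝓝 0)) :
    Tendsto (fun j => ∑' k, d j k * a k) l (𝓝 0) := by
  have := tendsto_tsum_of_dominated_convergence (ha.abs.mul_left M)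
    (fun k => (hlim k).mul_const (a k)) (Eventually.of_forall fun j k => by
      rw [norm_mul, Real.norm_eq_abs (a k)]
      exact mul_le_mul_of_nonneg_right (hd j k) (abs_nonneg _))
  simpa using this

lemma norm_tsum_smul_sub_tsum_smul_le {ι 𝕜 E : Type*} [NormedField 𝕜] [NormedAddCommGroup E]
    [NormedSpace 𝕜 E] [CompleteSpace E] {u v : ι → 𝕜} {B : ι → E} {w : ι → ℝ} {C : ℝ}
    (hB : Summable (‖B ·‖)) (hu : ∀ k, ‖u k‖ ≤ C) (hv : ∀ k, ‖v k‖ ≤ C)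
    (huv : ∀ k, ‖u k - v k‖ ≤ w k) (hw : Summable fun k => w k * ‖B k‖) :
    ‖∑' k, u k • B k - ∑' k, v k • B k‖ ≤ ∑' k, w k * ‖B k‖ := by
  have hsum : ∀ s : ι → 𝕜, (∀ k, ‖s k‖ ≤ C) → Summable fun k => s k • B k :=
    fun s hs => Summable.of_norm_bounded (hB.mul_left C) fun k => by
      rw [norm_smul]
      exact mul_le_mul_of_nonneg_right (hs k) (norm_nonneg _)
  rw [← (hsum u hu).tsum_sub (hsum v hv)]
  refine tsum_of_norm_bounded hw.hasSum fun k => ?_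
  rw [← sub_smul, norm_smul]
  exact mul_le_mul_of_nonneg_right (huv k) (norm_nonneg _)

lemma Matrix.frobenius_norm_map_ofReal {m n : Type*} [Fintype m] [Fintype n]
    (M : Matrix m n ℝ) : ‖M.map ofReal‖ = ‖M‖ :=
  frobenius_norm_map_eq M ofReal norm_real

lemma Real.exp_neg_mul_le_exp_mul {t T x β : ℝ} (ht₀ : 0 ≤ t) (htT : t ≤ T)
    (hx : x ∈ Set.Icc (-β) β) : Real.exp (-t * x) ≤ Real.exp (T * β) := by
  obtain ⟨hxl, hxr⟩ := hx
  exact Real.exp_le_exp.mpr (by nlinarith)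

lemma Complex.norm_exp_neg_mul_add_mul_I_sub (t x y ω : ℝ) :
    ‖cexp (-(t : ℂ) * (x + y * I)) - cexp (I * ω) * cexp (-(t : ℂ) * x)‖ =
      Real.exp (-t * x) * ‖cexp (-I * t * y) - cexp (I * ω)‖ := by
  have hsplit : cexp (-(t : ℂ) * (x + y * I)) = cexp (-(t : ℂ) * x) * cexp (-I * t * y) := by
    rw [← Complex.exp_add]
    ring_nf
  rw [hsplit, mul_comm (cexp (I * ω)), ← mul_sub, norm_mul]
  simp [Complex.norm_exp]

theorem delta0_uniform_convergence_on_strip_general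
    (n : ℕ) (τs : ℝ)
    (A : ℕ → Matrix (Fin n) (Fin n) ℝ) (hA : Summable fun k => ‖A k‖)
    (τ : ℕ → ℝ) (hτ : ∀ k, τ k ∈ Set.Ioc 0 τs)
    (ω : ℕ → ℝ) (y : ℕ → ℝ)
    (hconv : ∀ k : ℕ, Tendsto (fun j : ℕ => Complex.exp (-Complex.I * (τ k : ℂ) * (y j : ℂ)))
      atTop (nhds (Complex.exp (Complex.I * (ω k : ℂ)))))
    (Δ₀ : ℂ → Matrix (Fin n) (Fin n) ℂ)
    (hΔ₀ : ∀ z : ℂ, Δ₀ z =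
      1 + ∑' k : ℕ, Complex.exp (-(τ k : ℂ) * z) • (A k).map Complex.ofReal)
    (Δ₀ω : ℝ → Matrix (Fin n) (Fin n) ℂ)
    (hΔ₀ω : ∀ x : ℝ, Δ₀ω x =
      1 + ∑' k : ℕ, (Complex.exp (Complex.I * (ω k : ℂ)) * Complex.exp (-(τ k : ℂ) * (x : ℂ)))
        • (A k).map Complex.ofReal)
    (β : ℝ) :
    Tendsto (fun j : ℕ => ⨆ x ∈ Set.Icc (-β) β, ‖Δ₀ ((x : ℂ) + (y j : ℂ) * Complex.I) - Δ₀ω x‖)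
      atTop (nhds 0) := by
  set c := Real.exp (τs * β)
  set d : ℕ → ℕ → ℝ := fun j k => c * ‖cexp (-I * τ k * y j) - cexp (I * ω k)‖
  have hd_le : ∀ j k, ‖d j k‖ ≤ c * 2 := fun j k => by
    rw [norm_mul, norm_norm, Real.norm_of_nonneg (Real.exp_pos _).le]
    gcongr
    exact (norm_sub_le_of_le (r₁ := 1) (r₂ := 1) (by simp [Complex.norm_exp])
      (by simp [Complex.norm_exp])).trans_eq one_add_one_eq_two
  have hd_lim : ∀ k, Tendsto (d · k) atTop (𝓝 0) := fun k => by
    have := ((hconv k).sub_const (cexp (I * ω k))).norm.const_mul c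
    rwa [sub_self, norm_zero, mul_zero] at this
  have hB : Summable fun k => ‖(A k).map ofReal‖ := by
    simpa only [frobenius_norm_map_ofReal] using hA
  have hbound : ∀ j, ∀ x ∈ Set.Icc (-β) β,
      ‖Δ₀ (x + y j * I) - Δ₀ω x‖ ≤ ∑' k, d j k * ‖A k‖ := fun j x hx => by
    have hexp : ∀ k, Real.exp (-τ k * x) ≤ c := fun k =>
      Real.exp_neg_mul_le_exp_mul (hτ k).1.le (hτ k).2 hx
    have hw : Summable fun k => d j k * ‖(A k).map ofReal‖ := by
      simpa only [frobenius_norm_map_ofReal] using summable_mul_of_norm_le hA (hd_le j)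
    rw [hΔ₀, hΔ₀ω, add_sub_add_left_eq_sub]
    refine (norm_tsum_smul_sub_tsum_smul_le (w := d j) (C := c) hB
      (fun k => by simpa [Complex.norm_exp] using hexp k)
      (fun k => by simpa [Complex.norm_exp] using hexp k)
      (fun k => (norm_exp_neg_mul_add_mul_I_sub _ _ _ _).trans_le
        (mul_le_mul_of_nonneg_right (hexp k) (norm_nonneg _))) hw).trans_eq ?_
    simp only [frobenius_norm_map_ofReal]
  have hsum_nonneg : ∀ j, 0 ≤ ∑' k, d j k * ‖A k‖ := fun j =>
    tsum_nonneg fun k => mul_nonneg (by positivity) (norm_nonneg _)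
  refine squeeze_zero (fun j => Real.iSup_nonneg fun x => Real.iSup_nonneg fun _ => norm_nonneg _)
    (fun j => Real.iSup_le (fun x => Real.iSup_le (hbound j x) (hsum_nonneg j)) (hsum_nonneg j))
    (tendsto_tsum_mul_zero_of_norm_le hA hd_le hd_lim)

/-- if `e^{-iτ_k y_j} → e^{iω_k}` for every `k`, then
`sup_{x ∈ [-β,β]} ‖Δ₀(x + i y_j) - Δ₀^ω(x)‖ → 0` as `j → ∞`. -/
theorem delta0_uniform_convergence_on_strip
    (n : ℕ) (hn : 1 ≤ n) (τs : ℝ) (hτs : 0 < τs)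
    (A : ℕ → Matrix (Fin n) (Fin n) ℝ) (hA : Summable fun k => ‖A k‖)
    (τ : ℕ → ℝ) (hτmono : StrictMono τ) (hτ : ∀ k, τ k ∈ Set.Ioc 0 τs)
    (ω : ℕ → ℝ) (y : ℕ → ℝ)
    (hconv : ∀ k : ℕ, Tendsto (fun j : ℕ => Complex.exp (-Complex.I * (τ k : ℂ) * (y j : ℂ)))
      atTop (nhds (Complex.exp (Complex.I * (ω k : ℂ)))))
    (Δ₀ : ℂ → Matrix (Fin n) (Fin n) ℂ)
    (hΔ₀ : ∀ z : ℂ, Δ₀ z =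
      1 + ∑' k : ℕ, Complex.exp (-(τ k : ℂ) * z) • (A k).map Complex.ofReal)
    (Δ₀ω : ℝ → Matrix (Fin n) (Fin n) ℂ)
    (hΔ₀ω : ∀ x : ℝ, Δ₀ω x =
      1 + ∑' k : ℕ, (Complex.exp (Complex.I * (ω k : ℂ)) * Complex.exp (-(τ k : ℂ) * (x : ℂ)))
        • (A k).map Complex.ofReal)
    (β : ℝ) (hβ : 0 < β) :
    Tendsto (fun j : ℕ => ⨆ x ∈ Set.Icc (-β) β, ‖Δ₀ ((x : ℂ) + (y j : ℂ) * Complex.I) - Δ₀ω x‖)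
      atTop (nhds 0) :=
  delta0_uniform_convergence_on_strip_general n τs A hA τ hτ ω y hconv Δ₀ hΔ₀ Δ₀ω hΔ₀ω β
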